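/- arXiv:1406.0864 — 3 statements merged into one kernel-verified Lean document; each statement's English description precedes it below -/
import Mathlib

section
/- Let V be n-dimensional, F• a complete flag in V, H an ℓ-dimensional subspace, and α ∈ C(n,ℓ). Then H lies in the Schubert variety X_α F• (i.e., dim(H ∩ F_{α_i}) ≥ i for all i = 1,…,ℓ) if and only if H^⊥ lies in X_{α^⊥} F•^⊥, i.e., dim(H^⊥ ∩ (F_{n−α^⊥_j})^⊥) ≥ j for all j = 1,…,n−ℓ. -/
open Module

/-- The dual Schubert condition: `j ∈ dualC A ↔ j.rev ∉ A` (0-based version of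
`j ∈ α^⊥ ↔ n+1-j ∉ α`). -/
def dualC {n : ℕ} (A : Finset (Fin n)) : Finset (Fin n) :=
  Finset.univ.filter (fun j => j.rev ∉ A)

/-- Number of elements of `A` that are `< i` (as naturals). -/
private def cnt {n : ℕ} (A : Finset (Fin n)) (i : ℕ) : ℕ :=
  (A.filter (fun a : Fin n => (a : ℕ) < i)).card

private lemma cnt_le_card {n : ℕ} (A : Finset (Fin n)) (i : ℕ) : cnt A i ≤ A.card :=
  Finset.card_filter_le _ _

private lemma cnt_succ_eq_filter_le {n : ℕ} (A : Finset (Fin n)) (a : Fin n) :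
    cnt A ((a : ℕ) + 1) = (A.filter (fun a' : Fin n => a' ≤ a)).card := by
  unfold cnt
  congr 1
  apply Finset.filter_congr
  intro x _
  exact Nat.lt_succ_iff.trans (Fin.le_def).symm

private lemma cnt_succ_of_not_mem {n : ℕ} (A : Finset (Fin n)) (i : Fin n) (h : i ∉ A) :
    cnt A ((i : ℕ) + 1) = cnt A (i : ℕ) := by
  unfold cnt
  congr 1
  apply Finset.filter_congr
  intro x hx
  simp only [Nat.lt_succ_iff, eq_iff_iff]
  constructor
  · intro hle
    rcases lt_or_eq_of_le hle with h' | h'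
    · exact h'
    · exact absurd (Fin.ext h' ▸ hx) h
  · exact le_of_lt

private lemma cnt_succ_of_mem {n : ℕ} (A : Finset (Fin n)) (i : Fin n) (h : i ∈ A) :
    cnt A ((i : ℕ) + 1) = cnt A (i : ℕ) + 1 := by
  classical
  unfold cnt
  have : A.filter (fun a : Fin n => (a : ℕ) < (i : ℕ) + 1)
      = insert i (A.filter (fun a : Fin n => (a : ℕ) < (i : ℕ))) := by
    ext x
    simp only [Finset.mem_filter, Finset.mem_insert, Nat.lt_succ_iff]
    constructor
    · rintro ⟨hxA, hx⟩
      rcases lt_or_eq_of_le hx with h' | h'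
      · exact Or.inr ⟨hxA, h'⟩
      · exact Or.inl (Fin.ext h')
    · rintro (rfl | ⟨hxA, hx⟩)
      · exact ⟨h, le_rfl⟩
      · exact ⟨hxA, le_of_lt hx⟩
  rw [this, Finset.card_insert_of_notMem (by simp)]

private lemma cnt_eq_card_of_ge {n : ℕ} (A : Finset (Fin n)) (i : ℕ) (h : n ≤ i) :
    cnt A i = A.card := by
  unfold cnt
  rw [Finset.filter_true_of_mem]
  intro x _
  exact lt_of_lt_of_le x.isLt h

/-- Counting the dual conditions: key combinatorial identity. -/
private lemma dual_card {n : ℕ} (A : Finset (Fin n)) (b : Fin n) :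
    ((dualC A).filter (fun b' : Fin n => b' ≤ b)).card + A.card
      = cnt A ((b.rev : ℕ)) + ((b : ℕ) + 1) := by
  classical
  -- rev-bijection: the dual filter has the same card as S
  have hbij : ((dualC A).filter (fun b' : Fin n => b' ≤ b)).card
      = (Finset.univ.filter (fun a : Fin n => a ∉ A ∧ b.rev ≤ a)).card := by
    refine Finset.card_bij' (fun j _ => j.rev) (fun a _ => a.rev) ?_ ?_ ?_ ?_
    · intro j hj
      simp only [dualC, Finset.mem_filter, Finset.mem_univ, true_and] at hj ⊢
      exact ⟨hj.1, Fin.rev_le_rev.mpr hj.2⟩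
    · intro a ha
      simp only [dualC, Finset.mem_filter, Finset.mem_univ, true_and] at ha ⊢
      refine ⟨?_, ?_⟩
      · rw [Fin.rev_rev]; exact ha.1
      · rw [← Fin.rev_rev b]; exact Fin.rev_le_rev.mpr ha.2
    · intro j _; exact Fin.rev_rev j
    · intro a _; exact Fin.rev_rev a
  -- split {a : b.rev ≤ a} by membership in A
  have hsplit : (Finset.univ.filter (fun a : Fin n => a ∉ A ∧ b.rev ≤ a)).card
      + (A.filter (fun a : Fin n => b.rev ≤ a)).card
      = (Finset.univ.filter (fun a : Fin n => b.rev ≤ a)).card := by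
    have h1 : (Finset.univ.filter (fun a : Fin n => b.rev ≤ a)).filter (fun a => a ∈ A)
        = A.filter (fun a : Fin n => b.rev ≤ a) := by
      ext x; simp only [Finset.mem_filter, Finset.mem_univ, true_and]; tauto
    have h2 : (Finset.univ.filter (fun a : Fin n => b.rev ≤ a)).filter (fun a => a ∉ A)
        = Finset.univ.filter (fun a : Fin n => a ∉ A ∧ b.rev ≤ a) := by
      ext x; simp only [Finset.mem_filter, Finset.mem_univ, true_and]; tauto
    have := Finset.card_filter_add_card_filter_not
      (s := Finset.univ.filter (fun a : Fin n => b.rev ≤ a)) (p := fun a => a ∈ A)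
    rw [h1, h2] at this
    omega
  -- split A by position relative to b.rev
  have hsplitA : (A.filter (fun a : Fin n => b.rev ≤ a)).card + cnt A ((b.rev : ℕ)) = A.card := by
    have h2 : A.filter (fun a : Fin n => ¬ b.rev ≤ a)
        = A.filter (fun a : Fin n => (a : ℕ) < (b.rev : ℕ)) := by
      apply Finset.filter_congr
      intro x _
      exact not_le.trans Fin.lt_def
    have := Finset.card_filter_add_card_filter_not
      (s := A) (p := fun a : Fin n => b.rev ≤ a)
    rw [h2] at this
    exact this
  -- card of the upper interval
  have hIci : (Finset.univ.filter (fun a : Fin n => b.rev ≤ a)).card = (b : ℕ) + 1 := by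
    have h1 : Finset.univ.filter (fun a : Fin n => b.rev ≤ a) = Finset.Ici b.rev := by
      ext x; simp
    rw [h1, Fin.card_Ici, Fin.val_rev]
    omega
  omega

/-- `H ∈ X_α F• ↔ H^⊥ ∈ X_{α^⊥} F•^⊥`.  Here a Schubert condition
`α ∈ C(n,ℓ)` is an ℓ-subset `A` of `Fin n` (0-based), and the condition
`dim(H ∩ F_{αᵢ}) ≥ i` for all `i` is expressed as: for every `a ∈ A`,
`dim(H ∩ F (a+1)) ≥ #{a' ∈ A : a' ≤ a}` (the index of `a` in `α`); similarly
on the dual side with the dual flag `(F^⊥)ᵢ = (F_{n-i})^⊥`, so the `j`-th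
condition reads `dim(H^⊥ ∩ (F_{n-α^⊥ⱼ})^⊥) ≥ j`. -/
theorem stmt8 {k V : Type*} [Field k] [AddCommGroup V] [Module k V]
    [FiniteDimensional k V] {n ℓ : ℕ} (hV : finrank k V = n)
    (F : ℕ → Submodule k V) (hmono : Monotone F)
    (hdim : ∀ i ≤ n, finrank k ↥(F i) = i)
    (H : Submodule k V) (hH : finrank k ↥H = ℓ)
    (A : Finset (Fin n)) (hA : A.card = ℓ) :
    (∀ a ∈ A, (A.filter (fun a' : Fin n => a' ≤ a)).card ≤
        finrank k ↥(H ⊓ F ((a : ℕ) + 1))) ↔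
    (∀ b ∈ dualC A, ((dualC A).filter (fun b' : Fin n => b' ≤ b)).card ≤
        finrank k ↥(H.dualAnnihilator ⊓
          (F (n - ((b : ℕ) + 1))).dualAnnihilator)) := by
  classical
  have hln : ℓ ≤ n := by
    rw [← hH, ← hV]; exact Submodule.finrank_le H
  -- monotonicity of i ↦ dim (H ⊓ F i)
  have fmono : ∀ i j : ℕ, i ≤ j →
      finrank k ↥(H ⊓ F i) ≤ finrank k ↥(H ⊓ F j) := fun i j hij =>
    Submodule.finrank_mono (inf_le_inf_left H (hmono hij))
  -- dim (H ⊓ F i) ≤ i for i ≤ n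
  have fle : ∀ i ≤ n, finrank k ↥(H ⊓ F i) ≤ i := by
    intro i hi
    calc finrank k ↥(H ⊓ F i) ≤ finrank k ↥(F i) := Submodule.finrank_mono inf_le_right
    _ = i := hdim i hi
  -- dim (H ⊓ F n) = ℓ
  have ftop : finrank k ↥(H ⊓ F n) = ℓ := by
    have : F n = ⊤ := Submodule.eq_top_of_finrank_eq (by rw [hdim n le_rfl, hV])
    rw [this, inf_top_eq, hH]
  -- one-step growth
  have fstep : ∀ i : ℕ, i + 1 ≤ n →
      finrank k ↥(H ⊓ F (i + 1)) ≤ finrank k ↥(H ⊓ F i) + 1 := by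
    intro i hi
    have h1 : (H ⊓ F (i + 1)) ⊓ F i = H ⊓ F i := by
      rw [inf_assoc, inf_eq_right.mpr (hmono (Nat.le_succ i))]
    have h2 := Submodule.finrank_sup_add_finrank_inf_eq (H ⊓ F (i + 1)) (F i)
    rw [h1] at h2
    have h3 : finrank k ↥(H ⊓ F (i + 1) ⊔ F i) ≤ i + 1 := by
      calc finrank k ↥(H ⊓ F (i + 1) ⊔ F i) ≤ finrank k ↥(F (i + 1)) :=
        Submodule.finrank_mono (sup_le inf_le_right (hmono (Nat.le_succ i)))
      _ = i + 1 := hdim _ hi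
    have h4 : finrank k ↥(F i) = i := hdim i (Nat.le_of_succ_le hi)
    omega
  -- dual dimension identity
  have fdual : ∀ i ≤ n,
      finrank k ↥(H.dualAnnihilator ⊓ (F i).dualAnnihilator) + ℓ + i
        = n + finrank k ↥(H ⊓ F i) := by
    intro i hi
    have h1 : H.dualAnnihilator ⊓ (F i).dualAnnihilator = (H ⊔ F i).dualAnnihilator :=
      (Submodule.dualAnnihilator_sup_eq H (F i)).symm
    have h2 : finrank k ↥((H ⊔ F i).dualAnnihilator) + finrank k ↥(H ⊔ F i) = n := by
      have e : finrank k (V ⧸ (H ⊔ F i)) = finrank k ↥((H ⊔ F i).dualAnnihilator) :=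
        LinearEquiv.finrank_eq (Subspace.quotEquivAnnihilator (K := k) (H ⊔ F i))
      have q := Submodule.finrank_quotient_add_finrank (H ⊔ F i)
      rw [e] at q
      rw [q, hV]
    have h3 := Submodule.finrank_sup_add_finrank_inf_eq H (F i)
    rw [hH, hdim i hi] at h3
    rw [h1]
    omega
  -- the master condition
  have main : (∀ i ≤ n, cnt A i ≤ finrank k ↥(H ⊓ F i)) ↔
      ((∀ a ∈ A, (A.filter (fun a' : Fin n => a' ≤ a)).card ≤
        finrank k ↥(H ⊓ F ((a : ℕ) + 1)))) := by
    constructor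
    · intro key a ha
      rw [← cnt_succ_eq_filter_le]
      exact key _ a.isLt
    · intro hp
      intro i hi
      induction i with
      | zero =>
        have : cnt A 0 = 0 := by unfold cnt; simp
        omega
      | succ i ih =>
        have hi' : i < n := hi
        by_cases hmem : (⟨i, hi'⟩ : Fin n) ∈ A
        · have := hp _ hmem
          rw [← cnt_succ_eq_filter_le] at this
          rw [show (((⟨i, hi'⟩ : Fin n) : ℕ)) = i from rfl] at this
          exact this
        · calc cnt A (i + 1) = cnt A i :=
            cnt_succ_of_not_mem A ⟨i, hi'⟩ hmem
          _ ≤ finrank k ↥(H ⊓ F i) := ih (Nat.le_of_succ_le hi)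
          _ ≤ finrank k ↥(H ⊓ F (i + 1)) := fmono _ _ (Nat.le_succ i)
  have maind : (∀ i ≤ n, cnt A i ≤ finrank k ↥(H ⊓ F i)) ↔
      (∀ b ∈ dualC A, ((dualC A).filter (fun b' : Fin n => b' ≤ b)).card ≤
        finrank k ↥(H.dualAnnihilator ⊓
          (F (n - ((b : ℕ) + 1))).dualAnnihilator)) := by
    constructor
    · intro key b hb
      have hbn : (b : ℕ) < n := b.isLt
      have hrev : ((b.rev : ℕ)) = n - ((b : ℕ) + 1) := by
        rw [Fin.val_rev]
      have hi : n - ((b : ℕ) + 1) ≤ n := Nat.sub_le _ _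
      have hd := fdual _ hi
      have hc := dual_card A b
      rw [hrev, hA] at hc
      have hk := key _ hi
      have hfle := fle _ hi
      have hcle := cnt_le_card A (n - ((b : ℕ) + 1))
      rw [hA] at hcle
      omega
    · intro hd i hi
      -- downward induction via auxiliary statement
      have aux : ∀ j : ℕ, ∀ i : ℕ, i + j = n → cnt A i ≤ finrank k ↥(H ⊓ F i) := by
        intro j
        induction j with
        | zero =>
          intro i hij
          have : i = n := by omega
          rw [this, ftop, cnt_eq_card_of_ge A n le_rfl, hA]
        | succ j ih =>
          intro i hij
          have hi' : i < n := by omega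
          by_cases hmem : (⟨i, hi'⟩ : Fin n) ∈ A
          · have h1 := ih (i + 1) (by omega)
            have h2 := cnt_succ_of_mem A ⟨i, hi'⟩ hmem
            rw [show (((⟨i, hi'⟩ : Fin n) : ℕ)) = i from rfl] at h2
            have h3 := fstep i (by omega)
            omega
          · set b : Fin n := (⟨i, hi'⟩ : Fin n).rev with hbdef
            have hbmem : b ∈ dualC A := by
              simp only [dualC, Finset.mem_filter, Finset.mem_univ, true_and, hbdef,
                Fin.rev_rev]
              exact hmem
            have hbd := hd b hbmem
            have hbval : (b : ℕ) = n - (i + 1) := by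
              rw [hbdef, Fin.val_rev]
            have hsub : n - ((b : ℕ) + 1) = i := by omega
            rw [hsub] at hbd
            have hdd := fdual i (by omega)
            have hc := dual_card A b
            have hrev : ((b.rev : ℕ)) = i := by
              rw [hbdef, Fin.rev_rev]
            rw [hrev, hA] at hc
            have hfle := fle i (by omega)
            have hcle := cnt_le_card A i
            rw [hA] at hcle
            omega
      exact aux (n - i) i (by omega)
  rw [← main, maind]
end

section
/- For α ∈ C(n,ℓ) define ‖α‖ := #{β ∈ C(n,ℓ) : β ≰ α} in the componentwise order. Then |α| ≤ ‖α‖, where |α| = ℓ(n−ℓ) − Σᵢ(αᵢ − i). -/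
/-- `dim(α) = Σᵢ (αᵢ - i)` (0-based: `Σ a - card(card-1)/2`). -/
def dimC {n : ℕ} (A : Finset (Fin n)) : ℤ :=
  (∑ a ∈ A, (a : ℤ)) - ((A.card : ℤ) * ((A.card : ℤ) - 1)) / 2

/-- The codimension `|α| = ℓ(n-ℓ) - dim(α)` where `ℓ = #A`. -/
def codimC {n : ℕ} (A : Finset (Fin n)) : ℤ :=
  (A.card : ℤ) * ((n : ℤ) - (A.card : ℤ)) - dimC A

/-- Componentwise order on Schubert conditions: comparing the sorted lists of
elements entrywise. -/
def cleC {n : ℕ} (A B : Finset (Fin n)) : Prop :=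
  List.Forall₂ (· ≤ ·) (A.sort (· ≤ ·)) (B.sort (· ≤ ·))

/-- `‖α‖ := #{β ∈ C(n,ℓ) : β ≰ α}`. -/
noncomputable def normC (n ℓ : ℕ) (A : Finset (Fin n)) : ℕ :=
  Nat.card {B : Finset (Fin n) // B.card = ℓ ∧ ¬ cleC B A}

section Aux

variable {n : ℕ}

lemma sum_sort_eq (A : Finset (Fin n)) :
    (List.map (fun a : Fin n => (a : ℤ)) (A.sort (· ≤ ·))).sum = ∑ a ∈ A, (a : ℤ) := by
  rw [← Finset.sum_map_toList]
  exact List.Perm.sum_eq (List.Perm.map _ (Finset.sort_perm_toList _ _))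

lemma forall2_sum_le {l₁ l₂ : List (Fin n)} (h : List.Forall₂ (· ≤ ·) l₁ l₂) :
    (List.map (fun a : Fin n => (a : ℤ)) l₁).sum ≤ (List.map (fun a : Fin n => (a : ℤ)) l₂).sum := by
  induction h with
  | nil => simp
  | @cons a b l₁ l₂ hab _ ih =>
      have h1 : (a : ℤ) ≤ (b : ℤ) := by exact_mod_cast hab
      simp only [List.map_cons, List.sum_cons]
      exact add_le_add h1 ih

lemma cleC_sum_le {A B : Finset (Fin n)} (h : cleC B A) :
    ∑ b ∈ B, (b : ℤ) ≤ ∑ a ∈ A, (a : ℤ) := by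
  rw [← sum_sort_eq, ← sum_sort_eq]
  exact forall2_sum_le h

lemma step_exists {A : Finset (Fin n)}
    (h : ∃ a : Fin n, ∃ ha : a.val + 1 < n, a ∈ A ∧ (⟨a.val + 1, ha⟩ : Fin n) ∉ A) :
    ∃ B : Finset (Fin n), B.card = A.card ∧
      ∑ b ∈ B, (b : ℤ) = (∑ a ∈ A, (a : ℤ)) + 1 := by
  obtain ⟨a, ha, haA, ha'⟩ := h
  have hnm : (⟨a.val + 1, ha⟩ : Fin n) ∉ A.erase a := fun hm => ha' (Finset.mem_of_mem_erase hm)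
  refine ⟨insert (⟨a.val + 1, ha⟩ : Fin n) (A.erase a), ?_, ?_⟩
  · rw [Finset.card_insert_of_notMem hnm, Finset.card_erase_of_mem haA]
    have : 0 < A.card := Finset.card_pos.mpr ⟨a, haA⟩
    omega
  · rw [Finset.sum_insert hnm]
    have herase : (∑ x ∈ A.erase a, (x : ℤ)) + (a : ℤ) = ∑ x ∈ A, (x : ℤ) :=
      Finset.sum_erase_add A _ haA
    have : ((⟨a.val + 1, ha⟩ : Fin n) : ℤ) = (a : ℤ) + 1 := by push_cast; ring
    rw [this]
    linarith

lemma nogap_mem {A : Finset (Fin n)}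
    (h : ∀ (a : Fin n) (ha : a.val + 1 < n), a ∈ A → (⟨a.val + 1, ha⟩ : Fin n) ∈ A)
    {a : Fin n} (haA : a ∈ A) : ∀ (k : ℕ) (b : Fin n), b.val = a.val + k → b ∈ A := by
  intro k
  induction k with
  | zero =>
      intro b hb
      have : b = a := Fin.ext (by omega)
      rwa [this]
  | succ k ih =>
      intro b hb
      have hlt : a.val + k < n := by have := b.isLt; omega
      have hb' : (⟨a.val + k, hlt⟩ : Fin n) ∈ A := ih ⟨a.val + k, hlt⟩ rfl
      have hlt2 : a.val + k + 1 < n := by have := b.isLt; omega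
      have := h ⟨a.val + k, hlt⟩ hlt2 hb'
      have hbe : b = (⟨a.val + k + 1, hlt2⟩ : Fin n) := Fin.ext (by simp; omega)
      rwa [hbe]

lemma sum_range_gauss (k : ℕ) : 2 * ∑ i ∈ Finset.range k, (i : ℤ) = k * (k - 1) := by
  induction k with
  | zero => simp
  | succ k ih =>
      rw [Finset.sum_range_succ]
      push_cast
      push_cast at ih
      ring_nf
      ring_nf at ih
      linarith

lemma sum_univ_fin : 2 * ∑ a : Fin n, (a : ℤ) = n * (n - 1) := by
  rw [Fin.sum_univ_eq_sum_range (fun i => (i : ℤ)) n]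
  exact sum_range_gauss n

lemma sum_Iio_fin (m : Fin n) : 2 * ∑ a ∈ Finset.Iio m, (a : ℤ) = (m : ℤ) * ((m : ℤ) - 1) := by
  have hmap : (Finset.Iio m).map Fin.valEmbedding = Finset.Iio m.val := Fin.map_valEmbedding_Iio m
  have : ∑ a ∈ Finset.Iio m, (a : ℤ) = ∑ i ∈ Finset.Iio m.val, (i : ℤ) := by
    rw [← hmap, Finset.sum_map]
    rfl
  rw [this, Nat.Iio_eq_range]
  exact sum_range_gauss m.val

lemma even_int_mul_pred (k : ℤ) : (2 : ℤ) ∣ k * (k - 1) := by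
  rcases Int.even_or_odd k with he | ho
  · exact Dvd.dvd.mul_right he.two_dvd _
  · have : Even (k - 1) := by
      rcases ho with ⟨m, hm⟩; exact ⟨m, by omega⟩
    exact Dvd.dvd.mul_left this.two_dvd _

lemma nogap_codim {ℓ : ℕ} (hℓ : ℓ ≤ n) {A : Finset (Fin n)} (hA : A.card = ℓ)
    (h : ∀ (a : Fin n) (ha : a.val + 1 < n), a ∈ A → (⟨a.val + 1, ha⟩ : Fin n) ∈ A) :
    codimC A ≤ 0 := by
  rcases Nat.eq_zero_or_pos ℓ with h0 | hpos
  · subst h0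
    have : A = ∅ := Finset.card_eq_zero.mp hA
    subst this
    simp [codimC, dimC]
  · have hne : A.Nonempty := Finset.card_pos.mp (by omega)
    set m := A.min' hne with hm
    have hAI : A = Finset.Ici m := by
      apply Finset.eq_of_subset_of_card_le
      · intro b hb
        exact Finset.mem_Ici.mpr (A.min'_le b hb)
      · rw [Fin.card_Ici, hA]
        -- need n - m.val ≤ ℓ, i.e. everything ≥ m is in A
        have hsub : Finset.Ici m ⊆ A := by
          intro b hb
          have hmb : m ≤ b := Finset.mem_Ici.mp hb
          exact nogap_mem h (A.min'_mem hne) (b.val - m.val) b (by omega)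
        have := Finset.card_le_card hsub
        rw [Fin.card_Ici, hA] at this
        omega
    have hcard : n - m.val = ℓ := by rw [hAI, Fin.card_Ici] at hA; exact hA
    have hmval : m.val = n - ℓ := by omega
    -- sum over A = sum univ - sum over Iio m
    have hcompl : ∑ a ∈ Finset.Ici m, (a : ℤ) + ∑ a ∈ Finset.Iio m, (a : ℤ)
        = ∑ a : Fin n, (a : ℤ) := by
      rw [← Finset.sum_union]
      · congr 1
        ext a
        simp only [Finset.mem_union, Finset.mem_Ici, Finset.mem_Iio, Finset.mem_univ,
          iff_true, Fin.le_def, Fin.lt_def]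
        omega
      · rw [Finset.disjoint_left]
        intro a ha ha2
        rw [Finset.mem_Ici, Fin.le_def] at ha
        rw [Finset.mem_Iio, Fin.lt_def] at ha2
        omega
    have hsum : 2 * ∑ a ∈ A, (a : ℤ) = (n : ℤ) * (n - 1) - (m : ℤ) * ((m : ℤ) - 1) := by
      rw [hAI]
      have h1 := sum_univ_fin (n := n)
      have h2 := sum_Iio_fin m
      linarith
    -- the /2 term
    have hdvd : (2 : ℤ) ∣ (ℓ : ℤ) * ((ℓ : ℤ) - 1) := even_int_mul_pred _
    obtain ⟨t, ht⟩ := hdvd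
    have hdiv : ((ℓ : ℤ) * ((ℓ : ℤ) - 1)) / 2 = t := by rw [ht]; omega
    have hmZ : (m : ℤ) = (n : ℤ) - (ℓ : ℤ) := by omega
    unfold codimC dimC
    rw [hA, hdiv]
    rw [hmZ] at hsum
    nlinarith [hsum]

lemma chain_exists {ℓ : ℕ} (hℓ : ℓ ≤ n) (A : Finset (Fin n)) (hA : A.card = ℓ) :
    ∀ k : ℕ, (k : ℤ) ≤ codimC A →
      ∃ B : Finset (Fin n), B.card = ℓ ∧ ∑ b ∈ B, (b : ℤ) = (∑ a ∈ A, (a : ℤ)) + k := by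
  intro k
  induction k with
  | zero => exact fun _ => ⟨A, hA, by simp⟩
  | succ k ih =>
      intro hk
      obtain ⟨B, hBc, hBs⟩ := ih (by push_cast at hk ⊢; linarith)
      have hcodim : 0 < codimC B := by
        unfold codimC dimC at hk ⊢
        rw [hBc, hA] at *
        rw [hBs]
        push_cast at hk ⊢
        linarith
      by_cases hg : ∃ a : Fin n, ∃ ha : a.val + 1 < n, a ∈ B ∧ (⟨a.val + 1, ha⟩ : Fin n) ∉ B
      · obtain ⟨C, hCc, hCs⟩ := step_exists hg
        refine ⟨C, by omega, ?_⟩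
        rw [hCs, hBs]
        push_cast
        ring
      · exfalso
        push_neg at hg
        have hle := nogap_codim hℓ hBc (fun a ha haB => (hg a ha haB))
        omega

end Aux

/-- `|α| ≤ ‖α‖`. -/
theorem stmt12 {n ℓ : ℕ} (hℓ : ℓ ≤ n) (A : Finset (Fin n)) (hA : A.card = ℓ) :
    codimC A ≤ (normC n ℓ A : ℤ) := by
  by_cases h0 : codimC A ≤ 0
  · exact le_trans h0 (by positivity)
  push_neg at h0
  set d := (codimC A).toNat with hdd
  have hd : (d : ℤ) = codimC A := Int.toNat_of_nonneg (le_of_lt h0)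
  have hmap : ∀ j : Fin d, ∃ B : Finset (Fin n), B.card = ℓ ∧
      ∑ b ∈ B, (b : ℤ) = (∑ a ∈ A, (a : ℤ)) + (j.val + 1 : ℕ) :=
    fun j => chain_exists hℓ A hA (j.val + 1) (by have := j.isLt; omega)
  choose f hf1 hf2 using hmap
  have hncle : ∀ j : Fin d, ¬ cleC (f j) A := by
    intro j hc
    have h1 := cleC_sum_le hc
    have h2 := hf2 j
    push_cast at h2
    linarith
  have hinj : Function.Injective
      (fun j : Fin d => (⟨f j, hf1 j, hncle j⟩ : {B : Finset (Fin n) // B.card = ℓ ∧ ¬ cleC B A})) := by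
    intro i j hij
    have : f i = f j := congrArg Subtype.val hij
    have hs : (∑ a ∈ A, (a : ℤ)) + (i.val + 1 : ℕ) = (∑ a ∈ A, (a : ℤ)) + (j.val + 1 : ℕ) := by
      rw [← hf2 i, ← hf2 j, this]
    have : i.val = j.val := by push_cast at hs; omega
    exact Fin.ext this
  have hcard : d ≤ normC n ℓ A := by
    have := Nat.card_le_card_of_injective _ hinj
    simpa [normC] using this
  calc codimC A = (d : ℤ) := hd.symm
    _ ≤ (normC n ℓ A : ℤ) := by exact_mod_cast hcard
end

section
/- Let 1 < ℓ < n−1 and α ∈ C(n,ℓ). Then |α| = ‖α‖ (with |α| > 0) if and only if α = (n−ℓ, n−ℓ+2, n−ℓ+3, …, n), in which case |α| = ‖α‖ = 1. If ℓ = 1 or ℓ = n−1, then |α| = ‖α‖ for all α. -/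
/-- The condition `α = (n-ℓ, n-ℓ+2, n-ℓ+3, …, n)` (0-based: values `n-ℓ-1`
and all values `≥ n-ℓ+1`). -/
def hookC (n ℓ : ℕ) : Finset (Fin n) :=
  Finset.univ.filter (fun a : Fin n => (a : ℕ) = n - ℓ - 1 ∨ n - ℓ + 1 ≤ (a : ℕ))


/-!
Write `α` through its increasing enumeration `a`. Then `|α|` is the number of boxes `(k, j)`
with `j < n - ℓ + k - aₖ`. The box `(k, j)` gives the staircase
`(0, …, k - 1, n - ℓ + k - j, …, n - 1 - j)`, which is not below `α` because its `k`-th entry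
exceeds `aₖ`; distinct boxes give distinct staircases. Hence `|α| ≤ ‖α‖`, with equality iff
every `β ≰ α` is the staircase of a box of `α`. For `ℓ = 1` and `ℓ = n - 1` every `β ≰ α` has
this form. For `1 < ℓ < n - 1` the hook is never a staircase, while it is `≰ α` for every `α`
other than itself and the top element (where `|α| = 0`); the hook itself has a single box, and
the only `β` not below it is the top element.
-/

open Finset

section StrictMonoFin

variable {n ℓ : ℕ} {f : Fin ℓ → Fin n}

theorem StrictMono.val_add_sub_le (hf : StrictMono f) {i j : Fin ℓ} (hij : i ≤ j) :
    (f i : ℕ) + (j - i) ≤ f j := by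
  obtain ⟨d, hd⟩ := Nat.exists_eq_add_of_le (Fin.le_def.mp hij)
  induction d generalizing j with
  | zero => simp [Fin.ext (hd.trans (Nat.add_zero _))]
  | succ d ih =>
    have hd' : (i : ℕ) + d < ℓ := by omega
    have h1 := ih (j := ⟨i + d, hd'⟩) (Fin.le_def.mpr (by simp)) rfl
    have h2 : f ⟨i + d, hd'⟩ < f j := hf (Fin.lt_def.mpr (by simp; omega))
    simp only [Fin.lt_def] at h1 h2
    omega

theorem StrictMono.val_le_val_apply (hf : StrictMono f) (k : Fin ℓ) : (k : ℕ) ≤ f k := by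
  have := k.2
  have := hf.val_add_sub_le (i := ⟨0, by omega⟩) (j := k) (Nat.zero_le _)
  simp only at this
  omega

theorem StrictMono.val_apply_add_le (hf : StrictMono f) (k : Fin ℓ) : (f k : ℕ) + ℓ ≤ n + k := by
  have := k.2
  have := hf.val_add_sub_le (i := k) (j := ⟨ℓ - 1, by omega⟩) (by change (k : ℕ) ≤ ℓ - 1; omega)
  have := (f ⟨ℓ - 1, by omega⟩).2
  simp only at *
  omega

end StrictMonoFin

section OrderEmbOfFin

variable {α : Type*} [LinearOrder α] {ℓ : ℕ} {f g : Fin ℓ → α}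

theorem StrictMono.card_image_univ (hf : StrictMono f) : #(univ.image f) = ℓ := by
  rw [card_image_of_injective _ hf.injective, card_univ, Fintype.card_fin]

theorem StrictMono.image_univ_inj (hf : StrictMono f) (hg : StrictMono g) :
    univ.image f = univ.image g ↔ f = g := by
  rw [← coe_inj, coe_image, coe_image, coe_univ, Set.image_univ, Set.image_univ]
  exact hf.range_inj hg

theorem Finset.eq_image_univ_iff_orderEmbOfFin_eq {B : Finset α} (hB : #B = ℓ) (hf : StrictMono f) :
    B = univ.image f ↔ ⇑(B.orderEmbOfFin hB) = f := by
  constructor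
  · rintro rfl
    exact (orderEmbOfFin_unique hB (fun k => mem_image_of_mem f (mem_univ k)) hf).symm
  · intro h
    rw [← image_orderEmbOfFin_univ B hB, h]

end OrderEmbOfFin

theorem Fin.sum_intCast_val_mul_two (ℓ : ℕ) : (∑ k : Fin ℓ, ((k : ℕ) : ℤ)) * 2 = ℓ * (ℓ - 1) := by
  induction ℓ with
  | zero => simp
  | succ m ih =>
    simp only [Fin.sum_univ_castSucc, Fin.val_castSucc, Fin.val_last, add_mul, ih]
    push_cast
    ring

theorem cleC_iff_forall_le {n ℓ : ℕ} {A B : Finset (Fin n)} (hA : #A = ℓ) (hB : #B = ℓ) :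
    cleC B A ↔ ∀ k, B.orderEmbOfFin hB k ≤ A.orderEmbOfFin hA k := by
  rw [cleC, ← listMap_orderEmbOfFin_finRange B hB, ← listMap_orderEmbOfFin_finRange A hA,
    List.forall₂_map_left_iff, List.forall₂_map_right_iff, List.forall₂_same]
  simp

section Boxes

variable {n ℓ : ℕ} {A : Finset (Fin n)}

/-- The boxes `(k, j)`, `j < λₖ`, of the partition `λₖ = n - ℓ + k - αₖ` attached to `α`. -/
def boxes (A : Finset (Fin n)) (hA : #A = ℓ) : Finset (Fin ℓ × Fin n) :=
  {p | (p.2 : ℕ) + ℓ + A.orderEmbOfFin hA p.1 < n + p.1}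

theorem add_lt_of_mem_boxes {hA : #A = ℓ} {p : Fin ℓ × Fin n} (hp : p ∈ boxes A hA) :
    (p.2 : ℕ) + ℓ < n := by
  have : (p.1 : ℕ) ≤ A.orderEmbOfFin hA p.1 := (A.orderEmbOfFin hA).strictMono.val_le_val_apply _
  have := (mem_filter.mp hp).2
  omega

theorem card_boxes (hA : #A = ℓ) :
    #(boxes A hA) = ∑ k : Fin ℓ, (n - ℓ + (k : ℕ) - (A.orderEmbOfFin hA k : ℕ)) := by
  rw [boxes, card_filter, Fintype.sum_prod_type]
  refine sum_congr rfl fun k _ => ?_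
  have : (A.orderEmbOfFin hA k : ℕ) + ℓ ≤ n + k :=
    (A.orderEmbOfFin hA).strictMono.val_apply_add_le k
  have : (k : ℕ) ≤ A.orderEmbOfFin hA k := (A.orderEmbOfFin hA).strictMono.val_le_val_apply k
  have hcard := Fin.card_filter_val_lt (n := n) (m := n - ℓ + (k : ℕ) - (A.orderEmbOfFin hA k : ℕ))
  rw [min_eq_right (by omega)] at hcard
  rw [← card_filter, ← hcard]
  congr 1
  ext j
  simp only [mem_filter, mem_univ, true_and]
  omega

theorem codimC_eq_card_boxes (hA : #A = ℓ) : codimC A = #(boxes A hA) := by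
  set a := A.orderEmbOfFin hA
  have hsum : ∑ x ∈ A, ((x : ℕ) : ℤ) = ∑ k, ((a k : ℕ) : ℤ) := by
    conv_lhs => rw [← map_orderEmbOfFin_univ A hA, sum_map]
    rfl
  have hgauss : (ℓ : ℤ) * (ℓ - 1) / 2 = ∑ k : Fin ℓ, ((k : ℕ) : ℤ) := by
    rw [← Fin.sum_intCast_val_mul_two, Int.mul_ediv_cancel _ two_ne_zero]
  have hterm (k : Fin ℓ) :
      ((n - ℓ + (k : ℕ) - (a k : ℕ) : ℕ) : ℤ) = n - ℓ + ((k : ℕ) : ℤ) - ((a k : ℕ) : ℤ) := by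
    have : (a k : ℕ) + ℓ ≤ n + k := a.strictMono.val_apply_add_le k
    have : (k : ℕ) ≤ a k := a.strictMono.val_le_val_apply k
    omega
  rw [card_boxes, Nat.cast_sum, sum_congr rfl fun k _ => hterm k, codimC, dimC, hA, hsum, hgauss]
  simp only [sum_sub_distrib, sum_add_distrib, sum_const, card_univ, Fintype.card_fin,
    nsmul_eq_mul]
  ring

end Boxes

section NotLe

variable {n ℓ : ℕ} {A B : Finset (Fin n)}

open Classical in
noncomputable def notLeSet (n ℓ : ℕ) (A : Finset (Fin n)) : Finset (Finset (Fin n)) :=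
  {B | #B = ℓ ∧ ¬ cleC B A}

theorem mem_notLeSet : B ∈ notLeSet n ℓ A ↔ #B = ℓ ∧ ¬ cleC B A := by
  simp [notLeSet]

theorem normC_eq_card_notLeSet : normC n ℓ A = #(notLeSet n ℓ A) := by
  classical
  rw [normC, Nat.card_eq_fintype_card, Fintype.card_subtype, notLeSet]

end NotLe

section Staircase

variable {n ℓ : ℕ} (hle : ℓ ≤ n) {i j : ℕ}

def stair (i j : ℕ) : Fin ℓ → Fin n := fun k =>
  ⟨if (k : ℕ) < i then k else n - ℓ + k - j, by have := k.2; split <;> omega⟩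

theorem stair_val (k : Fin ℓ) :
    (stair hle i j k : ℕ) = if (k : ℕ) < i then (k : ℕ) else n - ℓ + k - j :=
  rfl

theorem strictMono_stair (hj : j + ℓ ≤ n) : StrictMono (stair hle i j) := by
  intro k k' hkk'
  rw [Fin.lt_def, stair_val, stair_val]
  have : (k : ℕ) < k' := hkk'
  split <;> split <;> omega

theorem stair_inj {i' j' : ℕ} (hi : i < ℓ) (hi' : i' < ℓ) (hj : j + ℓ < n) (hj' : j' + ℓ < n)
    (h : stair hle i j = stair hle i' j') : i = i' ∧ j = j' := by
  have hval (k : Fin ℓ) := congrArg Fin.val (congrFun h k)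
  have h₁ := hval ⟨i, hi⟩
  have h₂ := hval ⟨i', hi'⟩
  have h₃ := hval ⟨ℓ - 1, by omega⟩
  simp only [stair_val] at h₁ h₂ h₃
  split_ifs at h₁ h₂ h₃ <;> omega

def staircase (i j : ℕ) : Finset (Fin n) :=
  univ.image (stair hle i j)

variable {A : Finset (Fin n)}

theorem card_staircase (hj : j + ℓ ≤ n) : #(staircase hle i j) = ℓ :=
  (strictMono_stair hle hj).card_image_univ

theorem orderEmbOfFin_staircase (hj : j + ℓ ≤ n) :
    ⇑((staircase hle i j).orderEmbOfFin (card_staircase hle hj)) =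
      stair hle i j :=
  ((staircase hle i j).eq_image_univ_iff_orderEmbOfFin_eq _ (strictMono_stair hle hj)).mp rfl

theorem staircase_mem_notLeSet (hA : #A = ℓ) {p : Fin ℓ × Fin n} (hp : p ∈ boxes A hA) :
    staircase hle p.1 p.2 ∈ notLeSet n ℓ A := by
  have hj := (add_lt_of_mem_boxes hp).le
  refine mem_notLeSet.mpr ⟨card_staircase hle hj, fun hcle => ?_⟩
  have := (cleC_iff_forall_le hA (card_staircase hle hj)).mp hcle p.1
  rw [Fin.le_def, orderEmbOfFin_staircase hle hj, stair_val, if_neg (lt_irrefl _)] at this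
  have := (mem_filter.mp hp).2
  omega

theorem staircase_injOn (hA : #A = ℓ) :
    Set.InjOn (fun p : Fin ℓ × Fin n => staircase hle p.1 p.2) (boxes A hA) := by
  intro p hp q hq hpq
  have hpj := add_lt_of_mem_boxes hp
  have hqj := add_lt_of_mem_boxes hq
  have := stair_inj hle p.1.2 q.1.2 hpj hqj <|
    ((strictMono_stair hle hpj.le).image_univ_inj (strictMono_stair hle hqj.le)).mp hpq
  exact Prod.ext (Fin.ext this.1) (Fin.ext this.2)

theorem codimC_eq_normC_iff (hA : #A = ℓ) :
    codimC A = normC n ℓ A ↔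
      ∀ B ∈ notLeSet n ℓ A, ∃ p ∈ boxes A hA, staircase hle p.1 p.2 = B := by
  set T := (boxes A hA).image fun p => staircase hle p.1 p.2
  have hT : T ⊆ notLeSet n ℓ A := by
    intro B hB
    obtain ⟨p, hp, rfl⟩ := mem_image.mp hB
    exact staircase_mem_notLeSet hle hA hp
  have hcard : #T = #(boxes A hA) := card_image_of_injOn (staircase_injOn hle hA)
  rw [codimC_eq_card_boxes hA, normC_eq_card_notLeSet, ← hcard, Nat.cast_inj]
  refine ⟨fun h B hB => mem_image.mp ?_, fun h => ?_⟩
  · rw [← eq_of_subset_of_card_le hT h.ge] at hB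
    exact hB
  · exact congrArg card (Subset.antisymm hT fun B hB => mem_image.mpr (h B hB))

end Staircase

section Hook

variable {n ℓ : ℕ}

def hookFn (hn : ℓ < n) : Fin ℓ → Fin n := fun k =>
  ⟨if (k : ℕ) = 0 then n - ℓ - 1 else n - ℓ + k, by have := k.2; split <;> omega⟩

theorem hookFn_val (hn : ℓ < n) (k : Fin ℓ) :
    (hookFn hn k : ℕ) = if (k : ℕ) = 0 then n - ℓ - 1 else n - ℓ + k :=
  rfl

theorem strictMono_hookFn (hn : ℓ < n) : StrictMono (hookFn hn) := by
  intro k k' hkk'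
  rw [Fin.lt_def, hookFn_val, hookFn_val]
  have : (k : ℕ) < k' := hkk'
  split <;> split <;> omega

theorem hookC_eq_image (hn : ℓ < n) (hℓ : 0 < ℓ) : hookC n ℓ = univ.image (hookFn hn) := by
  ext x
  simp only [hookC, mem_filter, mem_univ, true_and, mem_image, Fin.ext_iff, hookFn_val]
  constructor
  · rintro (h | h)
    · exact ⟨⟨0, hℓ⟩, by simp [h]⟩
    · exact ⟨⟨x - (n - ℓ), by omega⟩, by simp only; split <;> omega⟩
  · rintro ⟨k, hk⟩
    split at hk <;> omega

theorem card_hookC (hn : ℓ < n) (hℓ : 0 < ℓ) : #(hookC n ℓ) = ℓ := by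
  rw [hookC_eq_image hn hℓ]
  exact (strictMono_hookFn hn).card_image_univ

theorem orderEmbOfFin_hookC (hn : ℓ < n) (hℓ : 0 < ℓ) :
    ⇑((hookC n ℓ).orderEmbOfFin (card_hookC hn hℓ)) = hookFn hn :=
  ((hookC n ℓ).eq_image_univ_iff_orderEmbOfFin_eq _ (strictMono_hookFn hn)).mp
    (hookC_eq_image hn hℓ)

theorem boxes_hookC (hn : ℓ < n) (hℓ : 0 < ℓ) :
    boxes (hookC n ℓ) (card_hookC hn hℓ) = {(⟨0, hℓ⟩, ⟨0, by omega⟩)} := by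
  ext ⟨k, j⟩
  simp only [boxes, mem_filter, mem_univ, true_and, mem_singleton, Prod.ext_iff, Fin.ext_iff,
    orderEmbOfFin_hookC hn hℓ, hookFn_val]
  split <;> omega

theorem codimC_hookC (hn : ℓ < n) (hℓ : 0 < ℓ) : codimC (hookC n ℓ) = 1 := by
  rw [codimC_eq_card_boxes (card_hookC hn hℓ), boxes_hookC hn hℓ, card_singleton, Nat.cast_one]

theorem exists_staircase_eq_of_mem_notLeSet_hookC (hn : ℓ < n) (hℓ : 0 < ℓ) {B : Finset (Fin n)}
    (hmem : B ∈ notLeSet n ℓ (hookC n ℓ)) :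
    ∃ p ∈ boxes (hookC n ℓ) (card_hookC hn hℓ), staircase hn.le p.1 p.2 = B := by
  obtain ⟨hB, hnle⟩ := mem_notLeSet.mp hmem
  obtain ⟨k, hk⟩ := not_forall.mp (mt (cleC_iff_forall_le (card_hookC hn hℓ) hB).mpr hnle)
  rw [not_le, Fin.lt_def, orderEmbOfFin_hookC hn hℓ, hookFn_val] at hk
  have hupper (k' : Fin ℓ) : (B.orderEmbOfFin hB k' : ℕ) + ℓ ≤ n + k' :=
    (B.orderEmbOfFin hB).strictMono.val_apply_add_le k'
  have hk0 : (k : ℕ) = 0 := by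
    have := hupper k
    split at hk <;> omega
  refine ⟨_, (boxes_hookC hn hℓ).symm ▸ mem_singleton_self _, ?_⟩
  change staircase hn.le 0 0 = B
  refine ((B.eq_image_univ_iff_orderEmbOfFin_eq hB (strictMono_stair _ (by omega))).mpr
    (funext fun k' => Fin.ext ?_)).symm
  have hgap : (B.orderEmbOfFin hB k : ℕ) + (k' - k) ≤ B.orderEmbOfFin hB k' :=
    (B.orderEmbOfFin hB).strictMono.val_add_sub_le (by rw [Fin.le_def]; omega)
  have := hupper k'
  rw [if_pos hk0] at hk
  rw [stair_val, if_neg (Nat.not_lt_zero _)]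
  omega

theorem normC_hookC (hn : ℓ < n) (hℓ : 0 < ℓ) : normC n ℓ (hookC n ℓ) = 1 := by
  have := (codimC_eq_normC_iff hn.le (card_hookC hn hℓ)).mpr
    fun _ => exists_staircase_eq_of_mem_notLeSet_hookC hn hℓ
  rw [codimC_hookC hn hℓ] at this
  exact_mod_cast this.symm


theorem hookC_mem_notLeSet (hn : ℓ < n) (hℓ : 0 < ℓ) {A : Finset (Fin n)} (hA : #A = ℓ)
    (hne : A ≠ hookC n ℓ) (hpos : 0 < codimC A) : hookC n ℓ ∈ notLeSet n ℓ A := by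
  refine mem_notLeSet.mpr ⟨card_hookC hn hℓ, fun hle => hne ?_⟩
  have hge (k : Fin ℓ) : (hookFn hn k : ℕ) ≤ A.orderEmbOfFin hA k := by
    have := (cleC_iff_forall_le hA (card_hookC hn hℓ)).mp hle k
    rwa [orderEmbOfFin_hookC hn hℓ] at this
  have hupper (k : Fin ℓ) : (A.orderEmbOfFin hA k : ℕ) + ℓ ≤ n + k :=
    (A.orderEmbOfFin hA).strictMono.val_apply_add_le k
  rw [codimC_eq_card_boxes hA, Nat.cast_pos, card_pos] at hpos
  obtain ⟨⟨k₀, j⟩, hbox⟩ := hpos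
  simp only [boxes, mem_filter, mem_univ, true_and] at hbox
  have hk₀ : (k₀ : ℕ) = 0 := by
    have := hge k₀
    rw [hookFn_val] at this
    split at this <;> omega
  refine ((A.eq_image_univ_iff_orderEmbOfFin_eq hA (strictMono_hookFn hn)).mpr
    (funext fun k => Fin.ext ?_)).trans (hookC_eq_image hn hℓ).symm
  have hk := hge k
  have := hupper k
  rw [hookFn_val] at hk ⊢
  split_ifs at hk ⊢ with hk0
  · obtain rfl : k = k₀ := Fin.ext (by omega)
    omega
  · omega

theorem staircase_ne_hookC (hle : ℓ ≤ n) (hℓ : 2 ≤ ℓ) (hn : ℓ + 2 ≤ n) {i j : ℕ} (hi : i < ℓ)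
    (hj : j + ℓ < n) : staircase hle i j ≠ hookC n ℓ := by
  intro h
  rw [hookC_eq_image (by omega) (by omega), staircase,
    (strictMono_stair _ hj.le).image_univ_inj (strictMono_hookFn _)] at h
  have hval (k : Fin ℓ) := congrArg Fin.val (congrFun h k)
  have h₀ := hval ⟨0, by omega⟩
  have h₁ := hval ⟨ℓ - 1, by omega⟩
  simp only [stair_val, hookFn_val] at h₀ h₁
  split_ifs at h₀ h₁ <;> omega

end Hook

section Extreme

variable {n : ℕ} {A : Finset (Fin n)}

theorem exists_staircase_eq_of_mem_notLeSet_of_card_eq_one (hA : #A = 1) (hle : 1 ≤ n)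
    {B : Finset (Fin n)} (hmem : B ∈ notLeSet n 1 A) :
    ∃ p ∈ boxes A hA, staircase hle p.1 p.2 = B := by
  obtain ⟨hB, hnle⟩ := mem_notLeSet.mp hmem
  obtain ⟨k, hk⟩ := not_forall.mp (mt (cleC_iff_forall_le hA hB).mpr hnle)
  rw [not_le, Fin.lt_def] at hk
  have hb := (B.orderEmbOfFin hB k).2
  refine ⟨(k, ⟨n - 1 - B.orderEmbOfFin hB k, by omega⟩), ?_, ?_⟩
  · simp only [boxes, mem_filter, mem_univ, true_and]
    omega
  · refine ((B.eq_image_univ_iff_orderEmbOfFin_eq hB (strictMono_stair _ (by simp only; omega))).mpr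
      (funext fun k' => Fin.ext ?_)).symm
    obtain rfl := Subsingleton.elim k k'
    simp only [stair_val, lt_irrefl, if_false]
    omega

theorem exists_staircase_eq_of_mem_notLeSet_of_card_eq_pred (hA : #A = n - 1)
    {B : Finset (Fin n)} (hmem : B ∈ notLeSet n (n - 1) A) :
    ∃ p ∈ boxes A hA, staircase (n.sub_le 1) p.1 p.2 = B := by
  obtain ⟨hB, hnle⟩ := mem_notLeSet.mp hmem
  obtain ⟨k, hk⟩ := not_forall.mp (mt (cleC_iff_forall_le hA hB).mpr hnle)
  rw [not_le, Fin.lt_def] at hk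
  obtain _ | n := n
  · exact k.elim0
  obtain ⟨x, rfl⟩ : ∃ x, B = {x}ᶜ := by
    obtain ⟨x, hx⟩ := card_eq_one.mp (by rw [card_compl, hB, Fintype.card_fin]; omega : #Bᶜ = 1)
    exact ⟨x, by rw [← hx, compl_compl]⟩
  have hb (k' : Fin (n + 1 - 1)) : (({x}ᶜ : Finset _).orderEmbOfFin hB k' : ℕ) =
      if (k' : ℕ) < x then (k' : ℕ) else k' + 1 := by
    rw [orderEmbOfFin_compl_singleton_apply, Fin.succAbove, apply_ite Fin.val]
    simp only [Fin.lt_def, Fin.val_castSucc, Fin.val_succ, Fin.val_cast]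
  have hak : (k : ℕ) ≤ A.orderEmbOfFin hA k := (A.orderEmbOfFin hA).strictMono.val_le_val_apply k
  rw [hb] at hk
  split_ifs at hk with hkx
  · omega
  have hgap : (A.orderEmbOfFin hA ⟨x, by omega⟩ : ℕ) + (k - x) ≤ A.orderEmbOfFin hA k :=
    (A.orderEmbOfFin hA).strictMono.val_add_sub_le (Fin.le_def.mpr (by simp only; omega))
  refine ⟨(⟨x, by omega⟩, ⟨0, by omega⟩), ?_, ?_⟩
  · simp only [boxes, mem_filter, mem_univ, true_and]
    omega
  · change staircase _ x 0 = _
    refine ((({x}ᶜ : Finset _).eq_image_univ_iff_orderEmbOfFin_eq hB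
      (strictMono_stair _ (by omega))).mpr
      (funext fun k' => Fin.ext ?_)).symm
    rw [hb, stair_val]
    split_ifs <;> omega

end Extreme

/-- For `1 < ℓ < n-1`: `|α| = ‖α‖` with `|α| > 0` iff
`α = (n-ℓ, n-ℓ+2, …, n)`, in which case both equal 1; and if `ℓ = 1` or
`ℓ = n-1` then `|α| = ‖α‖` for all `α`. -/
theorem stmt13 {n ℓ : ℕ} :
    (1 < ℓ → ℓ < n - 1 → ∀ A : Finset (Fin n), A.card = ℓ →
      (((codimC A = (normC n ℓ A : ℤ) ∧ 0 < codimC A) ↔ A = hookC n ℓ) ∧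
       (A = hookC n ℓ → codimC A = 1 ∧ normC n ℓ A = 1))) ∧
    ((ℓ = 1 ∨ ℓ = n - 1) → ∀ A : Finset (Fin n), A.card = ℓ →
      codimC A = (normC n ℓ A : ℤ)) := by
  refine ⟨fun hℓ hℓn A hA => ?_, ?_⟩
  · have hn : ℓ < n := by omega
    have hhook := And.intro (codimC_hookC hn (by omega)) (normC_hookC hn (by omega))
    refine ⟨⟨fun ⟨heq, hpos⟩ => ?_, ?_⟩, ?_⟩
    · by_contra hne
      obtain ⟨p, hp, hpB⟩ := (codimC_eq_normC_iff hn.le hA).mp heq _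
        (hookC_mem_notLeSet hn (by omega) hA hne hpos)
      exact staircase_ne_hookC hn.le hℓ (by omega) p.1.2 (add_lt_of_mem_boxes hp) hpB
    · rintro rfl
      simp [hhook]
    · rintro rfl
      exact hhook
  · rintro (rfl | rfl) A hA
    · have hn : 1 ≤ n := by simpa [hA] using card_le_univ A
      exact (codimC_eq_normC_iff hn hA).mpr fun _ =>
        exists_staircase_eq_of_mem_notLeSet_of_card_eq_one hA hn
    · exact (codimC_eq_normC_iff _ hA).mpr fun _ =>
        exists_staircase_eq_of_mem_notLeSet_of_card_eq_pred hA
end
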